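/- Let (Ω,σ) be a probability space, c : Ω → ℝ measurable, λ, μ ∈ ℝ with μ > 0, and set u₀ = A/sqrt(1+A²) where A = (c - λ)/μ. Then for every measurable u : Ω → ℝ with |u| ≤ 1 a.e., ∫ u₀ dσ = ∫ u dσ, and ∫ sqrt(1-u₀²) dσ ≤ ∫ sqrt(1-u²) dσ, one has ∫ c·u₀ dσ ≥ ∫ c·u dσ, with equality if and only if u = u₀ almost everywhere. -/

import Mathlib

/-!
Writing `A = (c - l) / μ`, Cauchy–Schwarz in `ℝ²` gives `A x + √(1 - x²) ≤ √(1 + A²)` for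
`|x| ≤ 1`, with equality exactly at `x = A / √(1 + A²)`. Hence, pointwise,
`(c - l) u + μ √(1 - u²) ≤ (c - l) u₀ + μ √(1 - u₀²)`. Integrating, the `l`-terms cancel because
`u` and `u₀` have the same mean, and the `μ`-terms can only help `u` by the second constraint,
so `∫ c u ≤ ∫ c u₀`; in case of equality the integrated pointwise inequality is an equality,
which forces `u = u₀` a.e.
-/

open MeasureTheory

section Pointwise

variable {x : ℝ}

lemma mul_add_sqrt_one_sub_sq_le (a : ℝ) (hx : |x| ≤ 1) :
    a * x + √(1 - x ^ 2) ≤ √(1 + a ^ 2) := by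
  have hx2 : x ^ 2 ≤ 1 := by nlinarith [sq_abs x, abs_nonneg x]
  have ht : √(1 - x ^ 2) ^ 2 = 1 - x ^ 2 := Real.sq_sqrt (by linarith)
  have hs : √(1 + a ^ 2) ^ 2 = 1 + a ^ 2 := Real.sq_sqrt (by positivity)
  nlinarith [sq_nonneg (a * √(1 - x ^ 2) - x), Real.sqrt_nonneg (1 + a ^ 2),
    Real.sqrt_nonneg (1 - x ^ 2)]

lemma mul_add_sqrt_one_sub_sq_eq_iff (a : ℝ) (hx : |x| ≤ 1) :
    a * x + √(1 - x ^ 2) = √(1 + a ^ 2) ↔ x = a / √(1 + a ^ 2) := by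
  have hs0 : 0 < √(1 + a ^ 2) := Real.sqrt_pos.2 (by positivity)
  have hs : √(1 + a ^ 2) ^ 2 = 1 + a ^ 2 := Real.sq_sqrt (by positivity)
  constructor
  · intro h
    have hx2 : x ^ 2 ≤ 1 := by nlinarith [sq_abs x, abs_nonneg x]
    have ht : √(1 - x ^ 2) ^ 2 = 1 - x ^ 2 := Real.sq_sqrt (by linarith)
    -- equality in Cauchy–Schwarz: `(a, 1)` is parallel to `(x, √(1 - x²))`
    have hpar : a = √(1 + a ^ 2) * x := by
      nlinarith [sq_nonneg (a - √(1 + a ^ 2) * x), Real.sqrt_nonneg (1 - x ^ 2)]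
    rw [eq_div_iff hs0.ne']
    linarith
  · rintro rfl
    have h1 : 1 - (a / √(1 + a ^ 2)) ^ 2 = (1 / √(1 + a ^ 2)) ^ 2 := by
      field_simp
      linarith
    rw [h1, Real.sqrt_sq (by positivity)]
    field_simp
    linarith

lemma mul_add_mul_sqrt_one_sub_sq_eq_mul {b : ℝ} (a : ℝ) (hb : b ≠ 0) :
    a * x + b * √(1 - x ^ 2) = b * (a / b * x + √(1 - x ^ 2)) := by
  field_simp

lemma mul_add_mul_sqrt_one_sub_sq_le {b : ℝ} (a : ℝ) (hb : 0 < b) (hx : |x| ≤ 1) :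
    a * x + b * √(1 - x ^ 2) ≤ b * √(1 + (a / b) ^ 2) := by
  rw [mul_add_mul_sqrt_one_sub_sq_eq_mul a hb.ne']
  exact mul_le_mul_of_nonneg_left (mul_add_sqrt_one_sub_sq_le (a / b) hx) hb.le

lemma mul_add_mul_sqrt_one_sub_sq_eq_iff {b : ℝ} (a : ℝ) (hb : 0 < b) (hx : |x| ≤ 1) :
    a * x + b * √(1 - x ^ 2) = b * √(1 + (a / b) ^ 2) ↔
      x = (a / b) / √(1 + (a / b) ^ 2) := by
  rw [mul_add_mul_sqrt_one_sub_sq_eq_mul a hb.ne', mul_right_inj' hb.ne',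
    mul_add_sqrt_one_sub_sq_eq_iff (a / b) hx]

lemma abs_div_sqrt_one_add_sq_le_one (a : ℝ) : |a / √(1 + a ^ 2)| ≤ 1 := by
  rw [← Real.sin_arctan]
  exact Real.abs_sin_le_one _

end Pointwise

section Integral

variable {Ω : Type*} [MeasurableSpace Ω] {σ : Measure Ω} [IsFiniteMeasure σ] {c v : Ω → ℝ}

lemma integrable_sub_mul_add_mul_sqrt_and_integral_eq {M : ℝ} (hc : Measurable c)
    (hcbd : ∀ ω, |c ω| ≤ M) (hv : Measurable v) (hv1 : ∀ᵐ ω ∂σ, |v ω| ≤ 1) (l μ : ℝ) :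
    Integrable (fun ω => (c ω - l) * v ω + μ * √(1 - v ω ^ 2)) σ ∧
      ∫ ω, (c ω - l) * v ω + μ * √(1 - v ω ^ 2) ∂σ =
        ∫ ω, c ω * v ω ∂σ - l * ∫ ω, v ω ∂σ + μ * ∫ ω, √(1 - v ω ^ 2) ∂σ := by
  have hcv : Integrable (fun ω => c ω * v ω) σ := by
    refine .of_bound (hc.mul hv).aestronglyMeasurable M ?_
    filter_upwards [hv1] with ω h
    rw [Real.norm_eq_abs, abs_mul]
    nlinarith [abs_nonneg (c ω), abs_nonneg (v ω), hcbd ω]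
  have hv' : Integrable v σ :=
    .of_bound hv.aestronglyMeasurable 1 (by simpa only [Real.norm_eq_abs] using hv1)
  have hs : Integrable (fun ω => √(1 - v ω ^ 2)) σ := by
    refine .of_bound (by fun_prop) 1 (.of_forall fun ω => ?_)
    rw [Real.norm_eq_abs, abs_of_nonneg (Real.sqrt_nonneg _), Real.sqrt_le_one]
    nlinarith [sq_nonneg (v ω)]
  have hlin : (fun ω => (c ω - l) * v ω + μ * √(1 - v ω ^ 2)) =
      fun ω => (c ω * v ω - l * v ω) + μ * √(1 - v ω ^ 2) := by
    ext ω; ring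
  have hlv : Integrable (fun ω => c ω * v ω - l * v ω) σ := hcv.sub (hv'.const_mul l)
  rw [hlin]
  refine ⟨hlv.add (hs.const_mul μ), ?_⟩
  rw [integral_add hlv (hs.const_mul μ), integral_sub hcv (hv'.const_mul l),
    integral_const_mul, integral_const_mul]

end Integral

/-- Core variational lemma (case `b > 0`): with `A = (c - l)/μ` (`μ > 0`) and
`u₀ = A/√(1+A²)`, for every measurable `u` with `|u| ≤ 1` a.e., `∫ u₀ = ∫ u` and
`∫ √(1-u₀²) ≤ ∫ √(1-u²)`, one has `∫ c u₀ ≥ ∫ c u`, with equality iff `u = u₀` a.e. -/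
theorem variational_lemma_b_pos (Ω : Type*) [MeasurableSpace Ω] (σ : Measure Ω)
    [IsProbabilityMeasure σ] (c : Ω → ℝ) (hc : Measurable c) (M : ℝ) (hcbd : ∀ ω, |c ω| ≤ M)
    (l μ : ℝ) (hμ : 0 < μ)
    (u₀ : Ω → ℝ) (hu₀ : ∀ ω, u₀ ω = ((c ω - l) / μ) / Real.sqrt (1 + ((c ω - l) / μ) ^ 2))
    (u : Ω → ℝ) (hu : Measurable u) (hu1 : ∀ᵐ ω ∂σ, |u ω| ≤ 1)
    (hmean : ∫ ω, u₀ ω ∂σ = ∫ ω, u ω ∂σ)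
    (hsqrt : ∫ ω, Real.sqrt (1 - u₀ ω ^ 2) ∂σ ≤ ∫ ω, Real.sqrt (1 - u ω ^ 2) ∂σ) :
    (∫ ω, c ω * u ω ∂σ ≤ ∫ ω, c ω * u₀ ω ∂σ) ∧
    (∫ ω, c ω * u₀ ω ∂σ = ∫ ω, c ω * u ω ∂σ ↔ u =ᵐ[σ] u₀) := by
  have hu₀m : Measurable u₀ := by rw [funext hu₀]; fun_prop
  have hu₀1 : ∀ᵐ ω ∂σ, |u₀ ω| ≤ 1 :=
    .of_forall fun ω => hu₀ ω ▸ abs_div_sqrt_one_add_sq_le_one _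
  obtain ⟨hFu, hIu⟩ := integrable_sub_mul_add_mul_sqrt_and_integral_eq hc hcbd hu hu1 l μ
  obtain ⟨hFu₀, hIu₀⟩ := integrable_sub_mul_add_mul_sqrt_and_integral_eq hc hcbd hu₀m hu₀1 l μ
  have hFu₀_eq : ∀ ω, (c ω - l) * u₀ ω + μ * √(1 - u₀ ω ^ 2) = μ * √(1 + ((c ω - l) / μ) ^ 2) :=
    fun ω => by
      rw [hu₀ ω]
      exact (mul_add_mul_sqrt_one_sub_sq_eq_iff _ hμ (abs_div_sqrt_one_add_sq_le_one _)).2 rfl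
  have hF_le : (fun ω => (c ω - l) * u ω + μ * √(1 - u ω ^ 2)) ≤ᵐ[σ]
      fun ω => (c ω - l) * u₀ ω + μ * √(1 - u₀ ω ^ 2) := by
    filter_upwards [hu1] with ω h
    exact (hFu₀_eq ω).symm ▸ mul_add_mul_sqrt_one_sub_sq_le _ hμ h
  have hint_le := integral_mono_ae hFu hFu₀ hF_le
  have hμsqrt := mul_le_mul_of_nonneg_left hsqrt hμ.le
  rw [hmean] at hIu₀
  refine ⟨by linarith, fun heq => ?_,
    fun h => integral_congr_ae (h.mono fun ω hω => by rw [hω]) |>.symm⟩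
  have hF_eq := (integral_eq_iff_of_ae_le hFu hFu₀ hF_le).1 (by linarith)
  filter_upwards [hF_eq, hu1] with ω h h1
  rw [hu₀ ω]
  exact (mul_add_mul_sqrt_one_sub_sq_eq_iff _ hμ h1).1 (h.trans (hFu₀_eq ω))
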